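/- Let T : ℝⁿ → ℝⁿ and let the power-iteration sequence (uᵏ) satisfy uᵏ⁺¹ = sign(⟨uᵏ, T(uᵏ)⟩) · T(uᵏ)/‖T(uᵏ)‖ with ‖uᵏ‖ = 1, T(uᵏ) ≠ 0 and ⟨uᵏ, T(uᵏ)⟩ ≠ 0 for all k. Suppose the iteration converges exactly at iteration N, i.e., uᵏ⁺¹ = uᵏ for all k ≥ N and uᵏ⁺¹ ≠ uᵏ for all k < N. Then |R(uᵏ)| < ‖T(uᵏ)‖ for all k < N, and |R(uᵏ)| = ‖T(uᴺ)‖ for all k ≥ N, where R(u) = ⟨u, T(u)⟩/‖u‖² is the Rayleigh quotient. -/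

import Mathlib

open scoped RealInnerProductSpace

/-!
For a unit vector `u`, Cauchy–Schwarz gives `|⟪u, T u⟫| ≤ ‖T u‖`, with equality exactly when
`T u` is a nonzero multiple `r • u`; and then the normalised, sign-corrected step
`sign r • |r|⁻¹ • r • u` returns `u`. Conversely, pairing a fixed point of the step with `u`
yields `‖T u‖⁻¹ * |⟪u, T u⟫| = 1`. So the inequality is strict before convergence and an
equality from iteration `N` on, where the sequence is constant.
-/

theorem Real.sign_mul_self_eq_abs (r : ℝ) : Real.sign r * r = |r| := by
  rcases lt_trichotomy r 0 with hr | rfl | hr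
  · rw [Real.sign_of_neg hr, abs_of_neg hr, neg_one_mul]
  · simp
  · rw [Real.sign_of_pos hr, abs_of_pos hr, one_mul]

section PowerIteration

variable {E : Type*} [NormedAddCommGroup E] [InnerProductSpace ℝ E] (T : E → E) {u : E}

noncomputable def powerIterationStep (u : E) : E :=
  Real.sign ⟪u, T u⟫ • (‖T u‖⁻¹ • T u)

theorem powerIterationStep_eq_self_iff (hu : ‖u‖ = 1) (hTu : T u ≠ 0) :
    powerIterationStep T u = u ↔ |⟪u, T u⟫| = ‖T u‖ := by
  have hTu' : ‖T u‖ ≠ 0 := norm_ne_zero_iff.2 hTu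
  constructor
  · intro hfix
    have hpair : ⟪u, powerIterationStep T u⟫ = 1 := by
      rw [hfix, real_inner_self_eq_norm_sq, hu, one_pow]
    rw [powerIterationStep, real_inner_smul_right, real_inner_smul_right, mul_left_comm,
      Real.sign_mul_self_eq_abs, inv_mul_eq_one₀ hTu'] at hpair
    exact hpair.symm
  · intro heq
    have hu0 : u ≠ 0 := norm_ne_zero_iff.1 (hu ▸ one_ne_zero)
    obtain ⟨r, hr, hTr⟩ := (norm_inner_eq_norm_iff (𝕜 := ℝ) hu0 hTu).1
      (by rwa [hu, one_mul, Real.norm_eq_abs])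
    have hinner : ⟪u, T u⟫ = r := by
      rw [hTr, real_inner_smul_right, real_inner_self_eq_norm_sq, hu, one_pow, mul_one]
    have hnorm : ‖T u‖ = |r| := by
      rw [hTr, norm_smul, hu, mul_one, Real.norm_eq_abs]
    rw [powerIterationStep, hinner, hnorm, hTr, smul_smul, smul_smul, mul_assoc, mul_left_comm,
      Real.sign_mul_self_eq_abs, inv_mul_cancel₀ (abs_ne_zero.2 hr), one_smul]

theorem abs_inner_lt_norm_iff_powerIterationStep_ne (hu : ‖u‖ = 1) (hTu : T u ≠ 0) :
    |⟪u, T u⟫| < ‖T u‖ ↔ powerIterationStep T u ≠ u := by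
  have hcs : |⟪u, T u⟫| ≤ ‖T u‖ := by
    simpa only [hu, one_mul] using abs_real_inner_le_norm u (T u)
  rw [hcs.lt_iff_ne, Ne, Ne, powerIterationStep_eq_self_iff T hu hTu]

end PowerIteration

theorem rayleigh_quotient_before_and_after_convergence_general
    (n : ℕ) (T : EuclideanSpace ℝ (Fin n) → EuclideanSpace ℝ (Fin n))
    (u : ℕ → EuclideanSpace ℝ (Fin n))
    (hrec : ∀ k, u (k + 1) =
      Real.sign ⟪u k, T (u k)⟫ • (‖T (u k)‖⁻¹ • T (u k)))
    (hnorm : ∀ k, ‖u k‖ = 1)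
    (hT : ∀ k, T (u k) ≠ 0)
    (N : ℕ)
    (hafter : ∀ k, N ≤ k → u (k + 1) = u k)
    (hbefore : ∀ k, k < N → u (k + 1) ≠ u k) :
    (∀ k, k < N → |⟪u k, T (u k)⟫ / ‖u k‖ ^ 2| < ‖T (u k)‖) ∧
      (∀ k, N ≤ k → |⟪u k, T (u k)⟫ / ‖u k‖ ^ 2| = ‖T (u N)‖) := by
  have hstep : ∀ k, powerIterationStep T (u k) = u (k + 1) := fun k => (hrec k).symm
  have hrayleigh : ∀ k, ⟪u k, T (u k)⟫ / ‖u k‖ ^ 2 = ⟪u k, T (u k)⟫ := fun k => by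
    rw [hnorm k, one_pow, div_one]
  have hconst : ∀ k, N ≤ k → u k = u N := fun k hk =>
    Nat.le_induction rfl (fun m hm ih => (hafter m hm).trans ih) k hk
  refine ⟨fun k hk => ?_, fun k hk => ?_⟩
  · rw [hrayleigh, abs_inner_lt_norm_iff_powerIterationStep_ne T (hnorm k) (hT k), hstep]
    exact hbefore k hk
  · rw [hrayleigh, hconst k hk, ← powerIterationStep_eq_self_iff T (hnorm N) (hT N), hstep]
    exact hafter N le_rfl

/-- If the power iteration converges exactly at iteration `N`, then the
Rayleigh quotient `R(u) = ⟪u, T u⟫ / ‖u‖²` satisfies `|R(u^k)| < ‖T (u^k)‖`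
strictly before convergence, and `|R(u^k)| = ‖T (u^N)‖` afterwards. -/
theorem rayleigh_quotient_before_and_after_convergence
    (n : ℕ) (T : EuclideanSpace ℝ (Fin n) → EuclideanSpace ℝ (Fin n))
    (u : ℕ → EuclideanSpace ℝ (Fin n))
    (hrec : ∀ k, u (k + 1) =
      Real.sign ⟪u k, T (u k)⟫ • (‖T (u k)‖⁻¹ • T (u k)))
    (hnorm : ∀ k, ‖u k‖ = 1)
    (hT : ∀ k, T (u k) ≠ 0)
    (hip : ∀ k, ⟪u k, T (u k)⟫ ≠ 0)
    (N : ℕ)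
    (hafter : ∀ k, N ≤ k → u (k + 1) = u k)
    (hbefore : ∀ k, k < N → u (k + 1) ≠ u k) :
    (∀ k, k < N → |⟪u k, T (u k)⟫ / ‖u k‖ ^ 2| < ‖T (u k)‖) ∧
      (∀ k, N ≤ k → |⟪u k, T (u k)⟫ / ‖u k‖ ^ 2| = ‖T (u N)‖) :=
  rayleigh_quotient_before_and_after_convergence_general n T u hrec hnorm hT N hafter hbefore
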